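/- Let (π, K) be a ĝ[σ]-module structure on W in category C, with π_R and π_E = π − π_R as defined. Let i ∈ ℤ and let a ∈ g_i satisfy B(a,a) = 0, and suppose that for every k ≡ i (mod N) the operator π(s^k ⊗ a) acts locally nilpotently on W (for every w ∈ W there is m with π(s^k ⊗ a)^m w = 0). Then for every k ≡ i (mod N), both π_R(s^k ⊗ a) and π_E(s^k ⊗ a) act locally nilpotently on W. -/

import Mathlib

open scoped TensorProduct

noncomputable section
namespace Twisted

variable (g : Type) [LieRing g] [LieAlgebra ℂ g]

abbrev Amb : Type := LaurentPolynomial ℂ ⊗[ℂ] g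

instance : LieAlgebra ℂ (Amb g) :=
  { (inferInstance : Module ℂ (Amb g)) with
    lie_smul := fun c x y => by
      rw [← algebraMap_smul (LaurentPolynomial ℂ) c y,
        lie_smul (R := LaurentPolynomial ℂ) (algebraMap ℂ (LaurentPolynomial ℂ) c) x y,
        algebraMap_smul] }

/-- `ε = exp(2πi/N)`. -/
def eps (N : ℕ) : ℂ := Complex.exp (2 * (Real.pi : ℂ) * Complex.I / (N : ℂ))

variable (σ : g ≃ₗ⁅ℂ⁆ g) (N : ℕ)

/-- `a ∈ g_k`, i.e. `σ a = ε^k • a`. -/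
def homog (k : ℤ) (a : g) : Prop := σ a = eps N ^ k • a

/-- The generators `s^k ⊗ a`, for `a ∈ g_k`. -/
def genSet : Set (Amb g) :=
  {x | ∃ (k : ℤ) (a : g), homog g σ N k a ∧ x = LaurentPolynomial.T k ⊗ₜ[ℂ] a}

/-- The twisted loop algebra `L(g,σ)`, the Lie subalgebra of `ℂ[s,s⁻¹] ⊗ g`
spanned by the elements `s^k ⊗ a` with `a ∈ g_k`. -/
def Loop : LieSubalgebra ℂ (Amb g) := LieSubalgebra.lieSpan ℂ (Amb g) (genSet g σ N)

/-- The element `s^k ⊗ a` of `L(g,σ)`, for `a ∈ g_k`. -/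
def sGen (k : ℤ) (a : g) (h : homog g σ N k a) : Loop g σ N :=
  ⟨LaurentPolynomial.T k ⊗ₜ[ℂ] a, LieSubalgebra.subset_lieSpan ⟨k, a, h, rfl⟩⟩

/-- The element `(s^k p(s^N)) ⊗ a` of `L(g,σ)`, for `a ∈ g_k`. -/
def sPolyGen (p : Polynomial ℂ) (k : ℤ) (a : g)
    (h : ∀ i : ℕ, homog g σ N (k + N * i) a) : Loop g σ N :=
  ∑ i ∈ Finset.range (p.natDegree + 1), p.coeff i • sGen g σ N (k + N * i) a (h i)

variable (N : ℕ) (W : Type) [AddCommGroup W] [Module ℂ W]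

/-- The shift operator on `F(W) = (ℤ → End W)`, encoding multiplication by `x`:
`(x·a)_k = a_{k+N}`. -/
def shiftE : Module.End ℂ (ℤ → Module.End ℂ W) where
  toFun a := fun k => a (k + N)
  map_add' _ _ := rfl
  map_smul' _ _ := rfl

/-- The action of `ℂ[x]` on `F(W)`. -/
def polyAct (p : Polynomial ℂ) (a : ℤ → Module.End ℂ W) : ℤ → Module.End ℂ W :=
  Polynomial.aeval (shiftE N W) p a

/-- Membership in `E(W)`. -/
def memE (a : ℤ → Module.End ℂ W) : Prop :=
  ∀ w : W, ∃ M : ℤ, ∀ k ≥ M, a k w = 0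

/-- Membership in `Ē(W)`. -/
def memEbar (a : ℤ → Module.End ℂ W) : Prop :=
  ∃ p : Polynomial ℂ, p ≠ 0 ∧ memE W (polyAct N W p a)

/-- Membership in `Ē₀(W)`. -/
def memE0 (a : ℤ → Module.End ℂ W) : Prop :=
  ∃ p : Polynomial ℂ, p ≠ 0 ∧ polyAct N W p a = 0

variable (g : Type) [LieRing g] [LieAlgebra ℂ g] (σ : g ≃ₗ⁅ℂ⁆ g) (N : ℕ)
variable (B : LinearMap.BilinForm ℂ g)

/-- `γ` is the bilinear form on `L(g,σ)` with
`γ(s^m ⊗ a, s^n ⊗ b) = (m/N) B(a,b) δ_{m+n,0}`. -/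
def IsGamma (γ : Loop g σ N →ₗ[ℂ] Loop g σ N →ₗ[ℂ] ℂ) : Prop :=
  ∀ (m n : ℤ) (a b : g) (ha : homog g σ N m a) (hb : homog g σ N n b),
    γ (sGen g σ N m a ha) (sGen g σ N n b hb) =
      if m + n = 0 then (m : ℂ) / (N : ℂ) * B a b else 0

variable (W : Type) [AddCommGroup W] [Module ℂ W]

/-- `(π, K)` is a `ĝ[σ]`-module structure on `W` (relative to the form `γ`). -/
def IsHatMod (π : Loop g σ N →ₗ[ℂ] Module.End ℂ W) (K : Module.End ℂ W)
    (γ : Loop g σ N →ₗ[ℂ] Loop g σ N →ₗ[ℂ] ℂ) : Prop :=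
  (∀ u, K * π u = π u * K) ∧
  (∀ u v, π u * π v - π v * π u = π ⁅u, v⁆ + γ u v • K)

/-- `(π, K)` is restricted. -/
def IsRestricted (π : Loop g σ N →ₗ[ℂ] Module.End ℂ W) : Prop :=
  ∀ (w : W) (i : ℤ) (a : g), homog g σ N i a →
    ∃ M : ℤ, ∀ k ≥ M, ∀ h : homog g σ N k a, π (sGen g σ N k a h) w = 0

/-- `(π, K)` is irreducible. -/
def IsIrred (π : Loop g σ N →ₗ[ℂ] Module.End ℂ W) (K : Module.End ℂ W) : Prop :=
  Nontrivial W ∧ ∀ S : Submodule ℂ W, (∀ x ∈ S, K x ∈ S) →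
    (∀ u, ∀ x ∈ S, π u x ∈ S) → S = ⊥ ∨ S = ⊤

open scoped Classical in
/-- The generating function `π_a ∈ F(W)` attached to a homogeneous element `a`. -/
def piFun (π : Loop g σ N →ₗ[ℂ] Module.End ℂ W) (a : g) : ℤ → Module.End ℂ W :=
  fun k => if h : homog g σ N k a then π (sGen g σ N k a h) else 0

/-- `(π, K)` lies in category `C`. -/
def InCatC (π : Loop g σ N →ₗ[ℂ] Module.End ℂ W) : Prop :=
  ∃ p : Polynomial ℂ, p ≠ 0 ∧ ∀ (i : ℤ) (a : g), homog g σ N i a →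
    memE W (polyAct N W p (piFun g σ N W π a))

/-- `πR` is the map `π_R` determined by `π_R(s^k ⊗ a) = (ψ_R(π_a))_k`,
where `ψ_R(π_a)` is the projection of `π_a` to `E(W)` along `Ē₀(W)`. -/
def IsPiR (π πR : Loop g σ N →ₗ[ℂ] Module.End ℂ W) : Prop :=
  ∀ a : g, (∃ i : ℤ, homog g σ N i a) →
    ∃ e : ℤ → Module.End ℂ W, memE W e ∧ memE0 N W (piFun g σ N W π a - e) ∧
      ∀ (k : ℤ) (h : homog g σ N k a), πR (sGen g σ N k a h) = e k

/-!
Write `π_a = e + r` with `e = ψ_R(π_a) ∈ E(W)` and `r ∈ Ē₀(W)`, and pick `q` with `q · r = 0` and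
`q(0) ≠ 0`. The recurrence `q · f = 0` expresses `f_t` as a combination of the `f_s`, `s > t`, so a
property of the `f_t` that holds for large `t` and is stable under such combinations holds for
all `t`; in particular `E(W) ∩ Ē₀(W) = 0`.

The operators `π_a(t)` commute pairwise, since `[a, a] = 0` and the central term is a multiple of
`B(a, a) = 0`. If `A` commutes with all `π_a(t)`, then `[A, e] = -[A, r]` lies in
`E(W) ∩ Ē₀(W)`, so `A` commutes with all `e_t`; hence all `π_a(t)`, `e_t`, `r_t` commute. Fix `w`.
For large `t` we have `e_t w = 0`, so `r_t = π_a(t) - e_t` is nilpotent on `w`; nilpotence on `w`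
is stable under linear combinations of commuting operators, so it propagates to every `r_t`, and
then to `e_t = π_a(t) - r_t`.
-/

end Twisted

namespace Module.End

variable {R M : Type*} [CommRing R] [AddCommGroup M] [Module R M]

lemma mem_maxGenEigenspace_zero_iff {x : End R M} {w : M} :
    w ∈ x.maxGenEigenspace 0 ↔ ∃ k : ℕ, (x ^ k) w = 0 := by
  simp only [mem_maxGenEigenspace, zero_smul, sub_zero]

lemma mem_maxGenEigenspace_zero_of_mem_span {S : Set (End R M)}
    (hS : ∀ x ∈ S, ∀ y ∈ S, Commute x y) {w : M} (hw : ∀ x ∈ S, w ∈ x.maxGenEigenspace 0)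
    {y : End R M} (hy : y ∈ Submodule.span R S) : w ∈ y.maxGenEigenspace 0 := by
  induction hy using Submodule.span_induction with
  | mem x hx => exact hw x hx
  | zero => exact mem_maxGenEigenspace_zero_iff.2 ⟨1, rfl⟩
  | add x y hx hy ihx ihy =>
    have hxy : Commute x y :=
      Commute.span_right (fun z hz => Commute.span_left (fun u hu => hS u hu z hz) x hx) y hy
    simpa using genEigenspace_inf_le_add x y 0 0 ⊤ ⊤ hxy ⟨ihx, ihy⟩
  | smul c x _ ihx => simpa using genEigenspace_le_smul x 0 c ⊤ ihx

end Module.End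

lemma Int.forall_of_forall_ge_of_step {P : ℤ → Prop} (M : ℤ) (hM : ∀ t ≥ M, P t)
    (hstep : ∀ t, (∀ s > t, P s) → P t) (t : ℤ) : P t := by
  have h : ∀ k : ℕ, ∀ s ≥ M - k, P s := by
    intro k
    induction k with
    | zero => simpa using hM
    | succ k ih => exact fun s hs => hstep s fun s' hs' => ih s' (by omega)
  exact h (M - t).toNat t (by omega)

namespace Twisted

variable {N : ℕ} {W : Type} [AddCommGroup W] [Module ℂ W]

@[simp]
lemma shiftE_apply (f : ℤ → Module.End ℂ W) (k : ℤ) : shiftE N W f k = f (k + N) := rfl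

lemma shiftE_pow_apply (j : ℕ) (f : ℤ → Module.End ℂ W) (k : ℤ) :
    (shiftE N W ^ j) f k = f (k + j * N) := by
  induction j generalizing k with
  | zero => simp
  | succ j ih =>
    rw [pow_succ', Module.End.mul_apply, shiftE_apply, ih]
    congr 1
    push_cast
    ring

lemma shiftE_injective : Function.Injective (shiftE N W) :=
  fun f f' h => funext fun k => by simpa using congrFun h (k - N)

lemma polyAct_apply (p : Polynomial ℂ) (f : ℤ → Module.End ℂ W) (k : ℤ) :
    polyAct N W p f k = ∑ j ∈ Finset.range (p.natDegree + 1), p.coeff j • f (k + j * N) := by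
  rw [polyAct, Polynomial.aeval_eq_sum_range, LinearMap.sum_apply, Finset.sum_apply]
  simp only [LinearMap.smul_apply, Pi.smul_apply, shiftE_pow_apply]

lemma memE0_comp (L : Module.End ℂ W →ₗ[ℂ] Module.End ℂ W) {f : ℤ → Module.End ℂ W}
    (hf : memE0 N W f) : memE0 N W (fun t => L (f t)) := by
  obtain ⟨p, hp, hpf⟩ := hf
  refine ⟨p, hp, funext fun t => ?_⟩
  have h := congrFun hpf t
  rw [polyAct_apply] at h ⊢
  simp only [← map_smul, ← map_sum, h, Pi.zero_apply, map_zero]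

-- `x` acts injectively, so the largest power of `x` dividing `p` can be cancelled.
lemma exists_coeff_zero_ne_zero_of_memE0 {f : ℤ → Module.End ℂ W} (hf : memE0 N W f) :
    ∃ q : Polynomial ℂ, q.coeff 0 ≠ 0 ∧ polyAct N W q f = 0 := by
  obtain ⟨p, hp, hpf⟩ := hf
  obtain ⟨q, hpq, hq⟩ := p.exists_eq_pow_rootMultiplicity_mul_and_not_dvd hp 0
  refine ⟨q, by simpa [Polynomial.X_dvd_iff] using hq, ?_⟩
  have hinj : Function.Injective (shiftE N W ^ p.rootMultiplicity 0) := by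
    rw [Module.End.coe_pow]
    exact shiftE_injective.iterate _
  apply hinj
  rw [polyAct, hpq, map_mul, map_pow, Module.End.mul_apply] at hpf
  simpa [polyAct] using hpf

lemma mem_span_of_polyAct_eq_zero (hN : 0 < N) {q : Polynomial ℂ} (hq0 : q.coeff 0 ≠ 0)
    {f : ℤ → Module.End ℂ W} (hq : polyAct N W q f = 0) (t : ℤ) :
    f t ∈ Submodule.span ℂ (f '' Set.Ioi t) := by
  have h := congrFun hq t
  rw [polyAct_apply, Finset.sum_range_succ', Pi.zero_apply] at h
  have hft : f t = -(q.coeff 0)⁻¹ •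
      ∑ j ∈ Finset.range q.natDegree, q.coeff (j + 1) • f (t + (j + 1 : ℕ) * N) := by
    rw [neg_smul, ← smul_neg, eq_inv_smul_iff₀ hq0, eq_neg_iff_add_eq_zero, add_comm]
    simpa using h
  rw [hft]
  refine Submodule.smul_mem _ _ (Submodule.sum_mem _ fun j _ => Submodule.smul_mem _ _ ?_)
  refine Submodule.subset_span ⟨_, ?_, rfl⟩
  have : (0 : ℤ) < (j + 1 : ℕ) * N := by positivity
  simp only [Set.mem_Ioi]
  omega

lemma eq_zero_of_memE_of_memE0 (hN : 0 < N) {f : ℤ → Module.End ℂ W} (hE : memE W f)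
    (hE0 : memE0 N W f) : f = 0 := by
  obtain ⟨q, hq0, hq⟩ := exists_coeff_zero_ne_zero_of_memE0 hE0
  suffices h : ∀ w t, f t w = 0 from funext fun t => LinearMap.ext fun w => h w t
  intro w
  obtain ⟨M, hM⟩ := hE w
  refine Int.forall_of_forall_ge_of_step M hM fun t ht => ?_
  have hspan : Submodule.span ℂ (f '' Set.Ioi t) ≤ LinearMap.ker (LinearMap.applyₗ w) :=
    Submodule.span_le.2 (by rintro _ ⟨s, hs, rfl⟩; exact ht s hs)
  exact hspan (mem_span_of_polyAct_eq_zero hN hq0 hq t)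

lemma commute_of_memE_of_memE0 (hN : 0 < N) {X e : ℤ → Module.End ℂ W} (he : memE W e)
    (hr : memE0 N W (X - e)) {A : Module.End ℂ W} (hA : ∀ t, Commute A (X t)) (t : ℤ) :
    Commute A (e t) := by
  set ad := LinearMap.mulLeft ℂ A - LinearMap.mulRight ℂ A
  have had : ∀ k, ad ((X - e) k) = -(A * e k - e k * A) := fun k => by
    simp only [ad, LinearMap.sub_apply, LinearMap.mulLeft_apply, LinearMap.mulRight_apply,
      Pi.sub_apply, mul_sub, sub_mul, (hA k).eq]
    abel
  have hE : memE W (fun k => ad ((X - e) k)) := by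
    intro w
    obtain ⟨M₁, hM₁⟩ := he w
    obtain ⟨M₂, hM₂⟩ := he (A w)
    refine ⟨max M₁ M₂, fun k hk => ?_⟩
    change ad ((X - e) k) w = 0
    rw [had, LinearMap.neg_apply, LinearMap.sub_apply, Module.End.mul_apply,
      Module.End.mul_apply, hM₁ k (le_of_max_le_left hk), hM₂ k (le_of_max_le_right hk),
      map_zero, sub_zero, neg_zero]
  have h0 := congrFun (eq_zero_of_memE_of_memE0 hN hE (memE0_comp ad hr)) t
  rw [Commute, SemiconjBy, ← sub_eq_zero, ← neg_eq_zero, ← had]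
  exact h0

section Splitting

variable {X e : ℤ → Module.End ℂ W} (hN : 0 < N) (he : memE W e) (hr : memE0 N W (X - e))
  (hX : ∀ s t, Commute (X s) (X t))
include hN he hr hX

lemma commute_of_mem_span_range_union :
    ∀ x ∈ Submodule.span ℂ (Set.range X ∪ Set.range e),
      ∀ y ∈ Submodule.span ℂ (Set.range X ∪ Set.range e), Commute x y := by
  have hXe : ∀ s t, Commute (X s) (e t) := fun s =>
    commute_of_memE_of_memE0 hN he hr (hX s)
  have hee : ∀ s t, Commute (e s) (e t) := fun s =>
    commute_of_memE_of_memE0 hN he hr fun t => (hXe t s).symm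
  have hS : ∀ x ∈ Set.range X ∪ Set.range e, ∀ y ∈ Set.range X ∪ Set.range e, Commute x y := by
    rintro _ (⟨s, rfl⟩ | ⟨s, rfl⟩) _ (⟨t, rfl⟩ | ⟨t, rfl⟩)
    exacts [hX s t, hXe s t, (hXe t s).symm, hee s t]
  exact fun x hx y hy =>
    Commute.span_left (fun x' hx' => Commute.span_right (hS x' hx') y hy) x hx

lemma mem_maxGenEigenspace_of_mem_span_of_subset {S : Set (Module.End ℂ W)}
    (hS : S ⊆ Submodule.span ℂ (Set.range X ∪ Set.range e)) {w : W}
    (hw : ∀ x ∈ S, w ∈ x.maxGenEigenspace 0) {y : Module.End ℂ W}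
    (hy : y ∈ Submodule.span ℂ S) : w ∈ y.maxGenEigenspace 0 :=
  have hcomm := commute_of_mem_span_range_union hN he hr hX
  Module.End.mem_maxGenEigenspace_zero_of_mem_span
    (fun x hx y hy => hcomm x (hS hx) y (hS hy)) hw hy

variable (hXnil : ∀ t w, w ∈ (X t).maxGenEigenspace 0)
include hXnil

lemma mem_maxGenEigenspace_sub_apply (t : ℤ) (w : W) : w ∈ ((X - e) t).maxGenEigenspace 0 := by
  have hnil := fun S => mem_maxGenEigenspace_of_mem_span_of_subset hN he hr hX (S := S) (w := w)
  have hXT : ∀ s, X s ∈ Submodule.span ℂ (Set.range X ∪ Set.range e) :=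
    fun s => Submodule.subset_span (.inl ⟨s, rfl⟩)
  have heT : ∀ s, e s ∈ Submodule.span ℂ (Set.range X ∪ Set.range e) :=
    fun s => Submodule.subset_span (.inr ⟨s, rfl⟩)
  obtain ⟨q, hq0, hq⟩ := exists_coeff_zero_ne_zero_of_memE0 hr
  obtain ⟨M, hM⟩ := he w
  refine Int.forall_of_forall_ge_of_step (P := fun s => w ∈ ((X - e) s).maxGenEigenspace 0) M
    (fun s hs => ?_) (fun s hs => ?_) t
  · refine hnil {X s, e s} (Set.insert_subset_iff.2 ⟨hXT s, Set.singleton_subset_iff.2 (heT s)⟩) ?_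
      (Submodule.sub_mem _ (Submodule.subset_span (by simp)) (Submodule.subset_span (by simp)))
    simp only [Set.mem_insert_iff, Set.mem_singleton_iff, forall_eq_or_imp, forall_eq]
    exact ⟨hXnil s w, Module.End.mem_maxGenEigenspace_zero_iff.2 ⟨1, by simpa using hM s hs⟩⟩
  · refine hnil _ ?_ ?_ (mem_span_of_polyAct_eq_zero hN hq0 hq s)
    · rintro _ ⟨s', -, rfl⟩
      exact Submodule.sub_mem _ (hXT s') (heT s')
    · rintro _ ⟨s', hs', rfl⟩
      exact hs s' hs'

lemma mem_maxGenEigenspace_apply (t : ℤ) (w : W) : w ∈ (e t).maxGenEigenspace 0 := by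
  have hXT : X t ∈ Submodule.span ℂ (Set.range X ∪ Set.range e) :=
    Submodule.subset_span (.inl ⟨t, rfl⟩)
  have heT : e t ∈ Submodule.span ℂ (Set.range X ∪ Set.range e) :=
    Submodule.subset_span (.inr ⟨t, rfl⟩)
  have het : e t = X t - (X - e) t := by simp
  rw [het]
  refine mem_maxGenEigenspace_of_mem_span_of_subset hN he hr hX (S := {X t, (X - e) t})
    (Set.insert_subset_iff.2 ⟨hXT, Set.singleton_subset_iff.2 (Submodule.sub_mem _ hXT heT)⟩)
    ?_ (Submodule.sub_mem _ (Submodule.subset_span (by simp)) (Submodule.subset_span (by simp)))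
  simp only [Set.mem_insert_iff, Set.mem_singleton_iff, forall_eq_or_imp, forall_eq]
  exact ⟨hXnil t w, mem_maxGenEigenspace_sub_apply hN he hr hX hXnil t w⟩

end Splitting

section LoopModule

variable {g : Type} [LieRing g] [LieAlgebra ℂ g] {σ : g ≃ₗ⁅ℂ⁆ g} {N : ℕ}
  {W : Type} [AddCommGroup W] [Module ℂ W] {π : Loop g σ N →ₗ[ℂ] Module.End ℂ W} {a : g}

lemma lie_sGen_sGen_self {s t : ℤ} (hs : homog g σ N s a) (ht : homog g σ N t a) :
    ⁅sGen g σ N s a hs, sGen g σ N t a ht⁆ = 0 := by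
  apply Subtype.ext
  change ⁅(LaurentPolynomial.T s ⊗ₜ[ℂ] a : Amb g), LaurentPolynomial.T t ⊗ₜ[ℂ] a⁆ = 0
  rw [LieAlgebra.ExtendScalars.bracket_tmul, lie_self, TensorProduct.tmul_zero]

lemma piFun_of_homog {k : ℤ} (h : homog g σ N k a) :
    piFun g σ N W π a k = π (sGen g σ N k a h) :=
  dif_pos h

lemma piFun_of_not_homog {k : ℤ} (h : ¬homog g σ N k a) : piFun g σ N W π a k = 0 :=
  dif_neg h

lemma commute_piFun {B : LinearMap.BilinForm ℂ g} {K : Module.End ℂ W}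
    {γ : Loop g σ N →ₗ[ℂ] Loop g σ N →ₗ[ℂ] ℂ} (hγ : IsGamma g σ N B γ)
    (hmod : IsHatMod g σ N W π K γ) (hBa : B a a = 0) (s t : ℤ) :
    Commute (piFun g σ N W π a s) (piFun g σ N W π a t) := by
  by_cases hs : homog g σ N s a
  · by_cases ht : homog g σ N t a
    · have hbr := hmod.2 (sGen g σ N s a hs) (sGen g σ N t a ht)
      rw [lie_sGen_sGen_self, map_zero, hγ, hBa] at hbr
      rw [piFun_of_homog hs, piFun_of_homog ht]
      exact sub_eq_zero.1 (by simpa using hbr)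
    · rw [piFun_of_not_homog ht]
      exact Commute.zero_right _
  · rw [piFun_of_not_homog hs]
    exact Commute.zero_left _

lemma mem_maxGenEigenspace_piFun
    (hnil : ∀ (k : ℤ) (h : homog g σ N k a) (w : W), ∃ m : ℕ, (π (sGen g σ N k a h) ^ m) w = 0)
    (t : ℤ) (w : W) : w ∈ (piFun g σ N W π a t).maxGenEigenspace 0 := by
  rw [Module.End.mem_maxGenEigenspace_zero_iff]
  by_cases ht : homog g σ N t a
  · rw [piFun_of_homog ht]
    exact hnil t ht w
  · exact ⟨1, by rw [piFun_of_not_homog ht, pow_one, LinearMap.zero_apply]⟩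

end LoopModule

theorem statement18_general
    (g : Type) [LieRing g] [LieAlgebra ℂ g]
    (N : ℕ) (hN : 0 < N) (σ : g ≃ₗ⁅ℂ⁆ g)
    (B : LinearMap.BilinForm ℂ g)
    (W : Type) [AddCommGroup W] [Module ℂ W]
    (π πR : Loop g σ N →ₗ[ℂ] Module.End ℂ W) (K : Module.End ℂ W)
    (γ : Loop g σ N →ₗ[ℂ] Loop g σ N →ₗ[ℂ] ℂ) (hγ : IsGamma g σ N B γ)
    (hmod : IsHatMod g σ N W π K γ)
    (hπR : IsPiR g σ N W π πR)
    (i : ℤ) (a : g) (ha : homog g σ N i a) (hBa : B a a = 0)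
    (hnil : ∀ (k : ℤ) (h : homog g σ N k a) (w : W),
      ∃ m : ℕ, (π (sGen g σ N k a h) ^ m) w = 0) :
    (∀ (k : ℤ) (h : homog g σ N k a) (w : W),
      ∃ m : ℕ, (πR (sGen g σ N k a h) ^ m) w = 0) ∧
    (∀ (k : ℤ) (h : homog g σ N k a) (w : W),
      ∃ m : ℕ, ((π - πR) (sGen g σ N k a h) ^ m) w = 0) := by
  obtain ⟨e, he, hr, hπR_eq⟩ := hπR a ⟨i, ha⟩
  have hX := commute_piFun hγ hmod hBa
  have hXnil := mem_maxGenEigenspace_piFun hnil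
  refine ⟨fun k h w => ?_, fun k h w => ?_⟩
  · rw [hπR_eq k h, ← Module.End.mem_maxGenEigenspace_zero_iff]
    exact mem_maxGenEigenspace_apply hN he hr hX hXnil k w
  · rw [LinearMap.sub_apply, hπR_eq k h, ← piFun_of_homog h, ← Pi.sub_apply,
      ← Module.End.mem_maxGenEigenspace_zero_iff]
    exact mem_maxGenEigenspace_sub_apply hN he hr hX hXnil k w

/-- For a category-`C` module structure `(π, K)` on `W`, if `a ∈ g_i`
satisfies `B(a,a) = 0` and all operators `π(s^k ⊗ a)` (for `k ≡ i (mod N)`) act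
locally nilpotently on `W`, then so do all operators `π_R(s^k ⊗ a)` and `π_E(s^k ⊗ a)`,
where `π_E = π − π_R`. -/
theorem statement18
    (g : Type) [LieRing g] [LieAlgebra ℂ g] [LieAlgebra.IsSimple ℂ g]
    [FiniteDimensional ℂ g]
    (N : ℕ) (hN : 0 < N) (σ : g ≃ₗ⁅ℂ⁆ g) (hσ : ∀ a : g, (⇑σ)^[N] a = a)
    (B : LinearMap.BilinForm ℂ g)
    (hBsymm : ∀ a b : g, B a b = B b a)
    (hBinv : ∀ a b c : g, B ⁅a, b⁆ c = B a ⁅b, c⁆)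
    (hBnd : ∀ a : g, (∀ b : g, B a b = 0) → a = 0)
    (W : Type) [AddCommGroup W] [Module ℂ W]
    (π πR : Loop g σ N →ₗ[ℂ] Module.End ℂ W) (K : Module.End ℂ W)
    (γ : Loop g σ N →ₗ[ℂ] Loop g σ N →ₗ[ℂ] ℂ) (hγ : IsGamma g σ N B γ)
    (hmod : IsHatMod g σ N W π K γ) (hC : InCatC g σ N W π)
    (hπR : IsPiR g σ N W π πR)
    (i : ℤ) (a : g) (ha : homog g σ N i a) (hBa : B a a = 0)
    (hnil : ∀ (k : ℤ) (h : homog g σ N k a) (w : W),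
      ∃ m : ℕ, (π (sGen g σ N k a h) ^ m) w = 0) :
    (∀ (k : ℤ) (h : homog g σ N k a) (w : W),
      ∃ m : ℕ, (πR (sGen g σ N k a h) ^ m) w = 0) ∧
    (∀ (k : ℤ) (h : homog g σ N k a) (w : W),
      ∃ m : ℕ, ((π - πR) (sGen g σ N k a h) ^ m) w = 0) :=
  statement18_general g N hN σ B W π πR K γ hγ hmod hπR i a ha hBa hnil

end Twisted
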